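/- Suppose E is a (0,a)-stable vector bundle of rank n ≥ 2 and degree d with d ≥ 2ng + s, and (F,W) is a coherent subsystem of (E,V) of type (n',d',k') with k/n ≤ k'/n', where k ≥ d + n(1−g) − t with integers 0 ≤ t ≤ a and 2t − s ≤ a. If moreover (F,W) satisfies the Clifford bound (k'/n' ≤ μ(F) + 1 − g when μ(F) ≥ 2g, and k'/n' ≤ μ(F)/2 + 1 when μ(F) < 2g), then a contradiction arises; i.e., no such proper subsystem exists. -/
import Mathlib


/-- Key step in Theorem 1.2: if `E` is a `(0,a)`-stable bundle of rank `n ≥ 2`, degree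
`d ≥ 2ng + s`, and `(F,W)` is a coherent subsystem of type `(n',d',k')` with
`k/n ≤ k'/n'`, where `k ≥ d + n(1-g) - t`, `0 ≤ t ≤ a`, `2t - s ≤ a`, and `(F,W)`
satisfies the Clifford bound, then a contradiction arises. -/
theorem no_destabilizing_subsystem (g n d k a t s n' d' k' : ℤ)
    (hg : 2 ≤ g) (hn : 2 ≤ n) (hn' : 1 ≤ n')
    (ht0 : 0 ≤ t) (hta : t ≤ a) (hts : 2 * t - s ≤ a)
    (hd : d ≥ 2 * n * g + s)
    (hk : k ≥ d + n * (1 - g) - t)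
    (hsub : (k : ℚ) / n ≤ (k' : ℚ) / n')
    (hstab : (d' : ℚ) / n' < ((d : ℚ) - a) / n)
    (hcliff1 : 2 * (g : ℚ) ≤ (d' : ℚ) / n' →
      (k' : ℚ) / n' ≤ (d' : ℚ) / n' + 1 - g)
    (hcliff2 : (d' : ℚ) / n' < 2 * (g : ℚ) →
      (k' : ℚ) / n' ≤ (d' : ℚ) / n' / 2 + 1) :
    False := by
  have hn0 : (0:ℚ) < n := by exact_mod_cast (by linarith : (0:ℤ) < n)
  have hkQ : (k:ℚ) ≥ (d:ℚ) + n * (1 - g) - t := by exact_mod_cast hk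
  have hdQ : (d:ℚ) ≥ 2 * n * g + s := by exact_mod_cast hd
  have htaQ : (t:ℚ) ≤ a := by exact_mod_cast hta
  have htsQ : 2 * (t:ℚ) - s ≤ a := by exact_mod_cast hts
  rcases le_or_gt (2 * (g:ℚ)) ((d':ℚ)/n') with h | h
  · have h1 := hcliff1 h
    have h3 : (k:ℚ)/n < ((d:ℚ) - a)/n + (1 - g) := by linarith
    have h4 : (k:ℚ) < (((d:ℚ) - a)/n + (1 - g)) * n := (div_lt_iff₀ hn0).mp h3
    rw [add_mul, div_mul_cancel₀ _ (ne_of_gt hn0)] at h4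
    linarith
  · have h2 := hcliff2 h
    have h3 : (k:ℚ)/n < (((d:ℚ) - a)/n) / 2 + 1 := by linarith
    have h4 : (k:ℚ) < ((((d:ℚ) - a)/n) / 2 + 1) * n := (div_lt_iff₀ hn0).mp h3
    rw [add_mul, div_div, mul_comm (n:ℚ) 2, ← div_div,
      div_mul_cancel₀ _ (ne_of_gt hn0)] at h4
    have hgQ : (2:ℚ) ≤ g := by exact_mod_cast hg
    nlinarith [h4, hkQ, hdQ, htsQ, hn0]
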